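/- arXiv:1312.3921 — 4 statements merged into one kernel-verified Lean document; each statement's English description precedes it below -/
import Mathlib

section
/- If a sequence (x^k) in a real Hilbert space H is quasi-Fejér convergent to a nonempty set S, and every weak cluster point of (x^k) belongs to S, then (x^k) converges weakly. -/
open RealInnerProductSpace

/-- Quasi-Fejér convergence of a sequence to a set `S`. -/
def QuasiFejer {H : Type*} [NormedAddCommGroup H] [InnerProductSpace ℝ H]
    (x : ℕ → H) (S : Set H) : Prop :=
  ∀ p ∈ S, ∃ k₀ : ℕ, ∃ δ : ℕ → ℝ, (∀ k, 0 ≤ δ k) ∧ Summable δ ∧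
    ∀ k ≥ k₀, ‖x (k + 1) - p‖ ^ 2 ≤ ‖x k - p‖ ^ 2 + δ k

/-- `l` is the weak limit of the sequence `x` (in a real Hilbert space,
weak convergence tested against all vectors via the inner product). -/
def WeakLimit {H : Type*} [NormedAddCommGroup H] [InnerProductSpace ℝ H]
    (x : ℕ → H) (l : H) : Prop :=
  ∀ y : H, Filter.Tendsto (fun k => ⟪x k - l, y⟫) Filter.atTop (nhds 0)

/-!
For every `p ∈ S` the quasi-Fejér inequality makes `‖x k - p‖²` converge, so `(x k)` is bounded
and, by weak sequential compactness of bounded sets, every subsequence has a further subsequence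
converging weakly, necessarily to a point of `S`. Two such limits `l, l'` coincide (Opial's
argument): `2⟪x k, l - l'⟫` differs from `‖x k - l'‖² - ‖x k - l‖²` by a constant, hence
converges, and its limit along the two subsequences is both `2⟪l, l - l'⟫` and `2⟪l', l - l'⟫`.
So every subsequence has a further subsequence converging weakly to one and the same point,
which forces the whole sequence to converge weakly to it.
-/

open Filter Topology Set

theorem exists_tendsto_of_le_add_of_summable {a δ : ℕ → ℝ} (ha : BddBelow (range a))
    (hδ : Summable δ) (hle : ∀ k, a (k + 1) ≤ a k + δ k) : ∃ L, Tendsto a atTop (𝓝 L) := by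
  set s : ℕ → ℝ := fun k => ∑ i ∈ Finset.range k, δ i
  have hs : Tendsto s atTop (𝓝 (∑' i, δ i)) := hδ.hasSum.tendsto_sum_nat
  have hanti : Antitone (a - s) := antitone_nat_of_succ_le fun k => by
    simp only [Pi.sub_apply, s, Finset.sum_range_succ]
    linarith [hle k]
  obtain ⟨m, hm⟩ := ha
  obtain ⟨B, hB⟩ := hs.bddAbove_range
  have hbdd : BddBelow (range (a - s)) := ⟨m - B, by
    rintro _ ⟨k, rfl⟩
    linarith [hm ⟨k, rfl⟩, hB ⟨k, rfl⟩, show (a - s) k = a k - s k from rfl]⟩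
  exact ⟨_, by simpa using (tendsto_atTop_ciInf hanti hbdd).add hs⟩

theorem exists_norm_le_of_tendsto_norm_sub_sq {E : Type*} [SeminormedAddCommGroup E]
    {x : ℕ → E} {p : E} {L : ℝ} (hL : Tendsto (fun k => ‖x k - p‖ ^ 2) atTop (𝓝 L)) :
    ∃ C, ∀ k, ‖x k‖ ≤ C := by
  obtain ⟨B, hB⟩ := hL.bddAbove_range
  refine ⟨√B + ‖p‖, fun k => ?_⟩
  have hk : ‖x k - p‖ ≤ √B := by simpa using Real.abs_le_sqrt (hB ⟨k, rfl⟩)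
  calc ‖x k‖ ≤ ‖x k - p‖ + ‖p‖ := norm_le_norm_sub_add _ _
    _ ≤ √B + ‖p‖ := by gcongr

section InnerProductSpace

variable {H : Type*} [NormedAddCommGroup H] [InnerProductSpace ℝ H]

theorem QuasiFejer.exists_tendsto_norm_sub_sq {x : ℕ → H} {S : Set H} (hx : QuasiFejer x S)
    {p : H} (hp : p ∈ S) : ∃ L, Tendsto (fun k => ‖x k - p‖ ^ 2) atTop (𝓝 L) := by
  obtain ⟨k₀, δ, -, hδ, hle⟩ := hx p hp
  obtain ⟨L, hL⟩ := exists_tendsto_of_le_add_of_summable (a := fun k => ‖x (k + k₀) - p‖ ^ 2)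
    ⟨0, by rintro _ ⟨k, rfl⟩; positivity⟩ ((summable_nat_add_iff k₀).2 hδ)
    fun k => by simpa only [add_right_comm k 1 k₀] using hle (k + k₀) (Nat.le_add_left _ _)
  exact ⟨L, (tendsto_add_atTop_iff_nat k₀).1 hL⟩

theorem WeakLimit.tendsto_inner {x : ℕ → H} {l : H} (hl : WeakLimit x l) (y : H) :
    Tendsto (fun k => ⟪x k, y⟫) atTop (𝓝 ⟪l, y⟫) := by
  simpa [inner_sub_left] using (hl y).add_const ⟪l, y⟫

theorem WeakLimit.of_forall_subseq {x : ℕ → H} {l : H}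
    (h : ∀ φ : ℕ → ℕ, StrictMono φ → ∃ σ : ℕ → ℕ, StrictMono σ ∧
      WeakLimit (fun n => x (φ (σ n))) l) : WeakLimit x l := fun y =>
  tendsto_of_subseq_tendsto fun ns hns => by
    obtain ⟨φ, -, hφ⟩ := strictMono_subseq_of_tendsto_atTop hns
    obtain ⟨σ, -, hσ⟩ := h _ hφ
    exact ⟨φ ∘ σ, hσ y⟩

theorem weakLimit_of_forall_mem_tendsto (K : Submodule ℝ H) [K.HasOrthogonalProjection]
    {w : ℕ → H} {l : H} (hw : ∀ k, w k ∈ K) (hl : l ∈ K)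
    (h : ∀ v ∈ K, Tendsto (fun k => ⟪w k - l, v⟫) atTop (𝓝 0)) : WeakLimit w l := fun y => by
  refine (h _ (K.starProjection_apply_mem y)).congr fun k => ?_
  rw [← K.inner_starProjection_left_eq_right,
    K.starProjection_eq_self_iff.2 (K.sub_mem (hw k) hl)]

/-- On the closed span `K` of the sequence, which is separable, the sequential Banach–Alaoglu
theorem gives a weak-* convergent subsequence of the functionals `⟪z k, ·⟫`; the Riesz
representative in `K` of its limit is the weak limit. -/
theorem exists_weakLimit_subseq_of_norm_le [CompleteSpace H] {z : ℕ → H} {C : ℝ}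
    (hC : ∀ k, ‖z k‖ ≤ C) : ∃ φ : ℕ → ℕ, StrictMono φ ∧ ∃ l, WeakLimit (fun n => z (φ n)) l := by
  set K := (Submodule.span ℝ (range z)).topologicalClosure
  have hzK : ∀ k, z k ∈ K := fun k =>
    Submodule.le_topologicalClosure _ (Submodule.subset_span ⟨k, rfl⟩)
  have : TopologicalSpace.SeparableSpace K :=
    (TopologicalSpace.isSeparable_closure.2 (countable_range z).isSeparable.span).separableSpace
  set f : ℕ → WeakDual ℝ K := fun k =>
    StrongDual.toWeakDual ((innerSL ℝ (z k)).comp K.subtypeL)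
  have hf : ∀ k, f k ∈ WeakDual.toStrongDual ⁻¹' Metric.closedBall 0 C := fun k => by
    change dist ((innerSL ℝ (z k)).comp K.subtypeL) 0 ≤ C
    refine (dist_zero_right ((innerSL ℝ (z k)).comp K.subtypeL)).trans_le ?_
    refine ContinuousLinearMap.opNorm_le_bound _ ((norm_nonneg _).trans (hC k)) fun v => ?_
    calc ‖⟪z k, (v : H)⟫‖ ≤ ‖z k‖ * ‖v‖ := norm_inner_le_norm _ _
      _ ≤ C * ‖v‖ := by gcongr; exact hC k
  obtain ⟨g, -, φ, hφ, hg⟩ := WeakDual.isSeqCompact_closedBall ℝ K 0 C hf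
  set l := (InnerProductSpace.toDual ℝ K).symm (WeakDual.toStrongDual g)
  refine ⟨φ, hφ, l, weakLimit_of_forall_mem_tendsto K (fun n => hzK _) l.2 fun v hv => ?_⟩
  have hlv : g ⟨v, hv⟩ = ⟪(l : H), v⟫ := (InnerProductSpace.toDual_symm_apply (𝕜 := ℝ)).symm
  have hgv := ((WeakDual.eval_continuous (⟨v, hv⟩ : K)).tendsto g).comp hg
  simpa [f, hlv, inner_sub_left] using hgv.sub_const ⟪(l : H), v⟫

theorem tendsto_inner_sub_of_tendsto_norm_sub_sq {x : ℕ → H} {l l' : H} {L L' : ℝ}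
    (hL : Tendsto (fun k => ‖x k - l‖ ^ 2) atTop (𝓝 L))
    (hL' : Tendsto (fun k => ‖x k - l'‖ ^ 2) atTop (𝓝 L')) :
    Tendsto (fun k => ⟪x k, l - l'⟫) atTop (𝓝 ((L' - L - (‖l'‖ ^ 2 - ‖l‖ ^ 2)) / 2)) := by
  refine (((hL'.sub hL).sub_const _).div_const 2).congr fun k => ?_
  rw [inner_sub_right, norm_sub_sq_real, norm_sub_sq_real]
  ring

theorem eq_of_weakLimit_of_tendsto_norm_sub_sq {x : ℕ → H} {l l' : H} {L L' : ℝ}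
    (hL : Tendsto (fun k => ‖x k - l‖ ^ 2) atTop (𝓝 L))
    (hL' : Tendsto (fun k => ‖x k - l'‖ ^ 2) atTop (𝓝 L'))
    {φ ψ : ℕ → ℕ} (hφ : Tendsto φ atTop atTop) (hψ : Tendsto ψ atTop atTop)
    (hl : WeakLimit (fun n => x (φ n)) l) (hl' : WeakLimit (fun n => x (ψ n)) l') : l = l' := by
  have hD := tendsto_inner_sub_of_tendsto_norm_sub_sq hL hL'
  have h : ⟪l, l - l'⟫ = ⟪l', l - l'⟫ :=
    (tendsto_nhds_unique (hl.tendsto_inner _) (hD.comp hφ)).trans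
      (tendsto_nhds_unique (hD.comp hψ) (hl'.tendsto_inner _))
  rw [← sub_eq_zero, ← inner_self_eq_zero (𝕜 := ℝ), inner_sub_left, h, sub_self]

end InnerProductSpace

theorem quasiFejer_weak_convergence
    {H : Type*} [NormedAddCommGroup H] [InnerProductSpace ℝ H] [CompleteSpace H]
    (S : Set H) (hS : S.Nonempty) (x : ℕ → H)
    (hx : QuasiFejer x S)
    (hcluster : ∀ l : H, ∀ φ : ℕ → ℕ, StrictMono φ →
      WeakLimit (fun n => x (φ n)) l → l ∈ S) :
    ∃ l : H, WeakLimit x l := by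
  obtain ⟨p, hp⟩ := hS
  obtain ⟨Lp, hLp⟩ := hx.exists_tendsto_norm_sub_sq hp
  obtain ⟨C, hC⟩ := exists_norm_le_of_tendsto_norm_sub_sq hLp
  have hsub : ∀ φ : ℕ → ℕ, StrictMono φ → ∃ σ : ℕ → ℕ, StrictMono σ ∧
      ∃ l ∈ S, WeakLimit (fun n => x (φ (σ n))) l := fun φ hφ => by
    obtain ⟨σ, hσ, l, hl⟩ := exists_weakLimit_subseq_of_norm_le fun n => hC (φ n)
    exact ⟨σ, hσ, l, hcluster l (φ ∘ σ) (hφ.comp hσ) hl, hl⟩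
  obtain ⟨σ, hσ, l, hlS, hl⟩ := hsub id strictMono_id
  refine ⟨l, WeakLimit.of_forall_subseq fun φ hφ => ?_⟩
  obtain ⟨τ, hτ, l', hl'S, hl'⟩ := hsub φ hφ
  obtain ⟨L, hL⟩ := hx.exists_tendsto_norm_sub_sq hlS
  obtain ⟨L', hL'⟩ := hx.exists_tendsto_norm_sub_sq hl'S
  have hl'l : l' = l := eq_of_weakLimit_of_tendsto_norm_sub_sq hL' hL
    (hφ.comp hτ).tendsto_atTop hσ.tendsto_atTop hl' hl
  exact ⟨τ, hτ, hl'l ▸ hl'⟩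
end

section
/- Let c : H → ℝ be a convex function on a real Hilbert space and C = {x ∈ H : c(x) ≤ 0}. Suppose there exists w ∈ C with c(w) < 0. Then for every y ∈ H with c(y) > 0, the distance from y to C satisfies dist(y, C) ≤ ‖y − w‖ · c(y) / (c(y) − c(w)). -/
open RealInnerProductSpace

open AffineMap

theorem ConvexOn.map_lineMap_le {E : Type*} [AddCommGroup E] [Module ℝ E] {s : Set E}
    {f : E → ℝ} (hf : ConvexOn ℝ s f) {x y : E} (hx : x ∈ s) (hy : y ∈ s) {t : ℝ}
    (ht₀ : 0 ≤ t) (ht₁ : t ≤ 1) :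
    f (lineMap x y t) ≤ (1 - t) * f x + t * f y := by
  rw [lineMap_apply_module]
  exact hf.2 hx hy (by linarith) ht₀ (by ring)

/-- The chord from `(x, f x)` to `(y, f y)` vanishes at parameter `f x / (f x - f y)`,
so convexity puts `f` below zero there. -/
theorem ConvexOn.map_lineMap_div_sub_nonpos {E : Type*} [AddCommGroup E] [Module ℝ E]
    {s : Set E} {f : E → ℝ} (hf : ConvexOn ℝ s f) {x y : E} (hx : x ∈ s) (hy : y ∈ s)
    (hfx : 0 ≤ f x) (hfy : f y < 0) :
    f (lineMap x y (f x / (f x - f y))) ≤ 0 := by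
  have hgap : 0 < f x - f y := by linarith
  have hchord : (1 - f x / (f x - f y)) * f x + f x / (f x - f y) * f y = 0 := by
    field_simp
    ring
  calc f (lineMap x y (f x / (f x - f y)))
      ≤ (1 - f x / (f x - f y)) * f x + f x / (f x - f y) * f y :=
        hf.map_lineMap_le hx hy (div_nonneg hfx hgap.le) ((div_le_one hgap).2 (by linarith))
    _ = 0 := hchord

theorem dist_le_of_slater
    {H : Type*} [NormedAddCommGroup H] [InnerProductSpace ℝ H]
    (c : H → ℝ) (hc : ConvexOn ℝ Set.univ c)
    (w : H) (hw : c w < 0)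
    (y : H) (hy : 0 < c y) :
    Metric.infDist y {x : H | c x ≤ 0} ≤ ‖y - w‖ * c y / (c y - c w) := by
  set t := c y / (c y - c w)
  have ht : 0 ≤ t := div_nonneg hy.le (by linarith)
  calc Metric.infDist y {x : H | c x ≤ 0} ≤ dist y (lineMap y w t) :=
        Metric.infDist_le_dist_of_mem (hc.map_lineMap_div_sub_nonpos trivial trivial hy.le hw)
    _ = t * ‖y - w‖ := by rw [dist_left_lineMap, Real.norm_of_nonneg ht, dist_eq_norm]
    _ = ‖y - w‖ * c y / (c y - c w) := by rw [mul_comm, mul_div_assoc]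
end

section
/- Let C ⊆ H be nonempty closed convex, (α_k) positive reals with σ_k = ∑_{j=0}^k α_j → ∞, and (z^j) a bounded sequence in H with dist(z^j, C) ≤ θ α_j for some θ > 0 and all j, where ∑_j α_j² < ∞. Define x^{k+1} = (1/σ_k) ∑_{j=0}^k α_j z^j. Then lim_{k→∞} dist(x^{k+1}, C) = 0. -/
theorem averaged_iterates_asymptotically_feasible
    {H : Type*} [NormedAddCommGroup H] [InnerProductSpace ℝ H]
    (C : Set H) (hC : C.Nonempty) (hclosed : IsClosed C) (hconv : Convex ℝ C)
    (α : ℕ → ℝ) (hα : ∀ k, 0 < α k)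
    (σ : ℕ → ℝ) (hσ : ∀ k, σ k = ∑ j ∈ Finset.range (k + 1), α j)
    (hσ_top : Filter.Tendsto σ Filter.atTop Filter.atTop)
    (hα2 : Summable fun j => (α j) ^ 2)
    (z : ℕ → H) (hzbdd : ∃ R : ℝ, ∀ j, ‖z j‖ ≤ R)
    (θ : ℝ) (hθ : 0 < θ)
    (hdist : ∀ j, Metric.infDist (z j) C ≤ θ * α j)
    (x : ℕ → H)
    (hx : ∀ k, x (k + 1) = (σ k)⁻¹ • ∑ j ∈ Finset.range (k + 1), α j • z j) :
    Filter.Tendsto (fun k => Metric.infDist (x (k + 1)) C)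
      Filter.atTop (nhds 0) := by
  -- choose near-projections w j ∈ C
  obtain ⟨w, hwC, hwz⟩ : ∃ w : ℕ → H, (∀ j, w j ∈ C) ∧ ∀ j, ‖z j - w j‖ ≤ (θ + 1) * α j := by
    have h : ∀ j, ∃ y ∈ C, dist (z j) y < (θ + 1) * α j := by
      intro j
      rw [← Metric.infDist_lt_iff hC]
      have := hdist j
      nlinarith [hα j]
    choose w hw1 hw2 using h
    exact ⟨w, hw1, fun j => by rw [← dist_eq_norm]; exact (hw2 j).le⟩
  set S := ∑' j, (α j) ^ 2 with hSdef
  have hσpos : ∀ k, 0 < σ k := fun k => by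
    rw [hσ]
    exact Finset.sum_pos (fun j _ => hα j) ⟨0, Finset.mem_range.mpr (Nat.succ_pos k)⟩
  have hSnn : 0 ≤ S := tsum_nonneg fun j => sq_nonneg _
  have hbound : ∀ k, Metric.infDist (x (k + 1)) C ≤ ((θ + 1) * S) * (σ k)⁻¹ := by
    intro k
    set y := (σ k)⁻¹ • ∑ j ∈ Finset.range (k + 1), α j • w j with hy
    have hyC : y ∈ C := by
      rw [hy, Finset.smul_sum]
      simp_rw [smul_smul]
      apply hconv.sum_mem
      · intro j _
        exact mul_nonneg (inv_nonneg.mpr (hσpos k).le) (hα j).le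
      · rw [← Finset.mul_sum, ← hσ k, inv_mul_cancel₀ (hσpos k).ne']
      · intro j _; exact hwC j
    refine le_trans (Metric.infDist_le_dist_of_mem hyC) ?_
    rw [dist_eq_norm, hx, hy, ← smul_sub, ← Finset.sum_sub_distrib]
    simp_rw [← smul_sub]
    rw [norm_smul, norm_inv, Real.norm_of_nonneg (hσpos k).le, mul_comm]
    apply mul_le_mul_of_nonneg_right ?_ (inv_nonneg.mpr (hσpos k).le)
    calc ‖∑ j ∈ Finset.range (k + 1), α j • (z j - w j)‖
        ≤ ∑ j ∈ Finset.range (k + 1), ‖α j • (z j - w j)‖ := norm_sum_le _ _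
      _ ≤ ∑ j ∈ Finset.range (k + 1), (θ + 1) * (α j) ^ 2 := by
          apply Finset.sum_le_sum
          intro j _
          rw [norm_smul, Real.norm_of_nonneg (hα j).le]
          calc α j * ‖z j - w j‖ ≤ α j * ((θ + 1) * α j) :=
                mul_le_mul_of_nonneg_left (hwz j) (hα j).le
            _ = (θ + 1) * (α j) ^ 2 := by ring
      _ = (θ + 1) * ∑ j ∈ Finset.range (k + 1), (α j) ^ 2 := by rw [Finset.mul_sum]
      _ ≤ (θ + 1) * S := by
          apply mul_le_mul_of_nonneg_left ?_ (by linarith)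
          exact Summable.sum_le_tsum _ (fun j _ => sq_nonneg _) hα2
  have htend : Filter.Tendsto (fun k => ((θ + 1) * S) * (σ k)⁻¹) Filter.atTop (nhds 0) := by
    have := hσ_top.inv_tendsto_atTop
    simpa using this.const_mul ((θ + 1) * S)
  exact squeeze_zero (fun k => Metric.infDist_nonneg) hbound htend
end

section
/- Let S be a nonempty closed convex subset of a real Hilbert space H, let (z^k) be a bounded sequence in H with p^k = P_S(z^k) converging strongly to x_*, and suppose x̄ ∈ S is a weak cluster point of a sequence (x^k) where x^{k} = (1/σ_{k−1}) ∑_{j=0}^{k−1} α_j z^{j+1} with α_j > 0, σ_k = ∑_{j=0}^k α_j → ∞. If additionally (1/σ_k) ∑_{j=0}^k α_j ‖p^{j+1} − x_*‖ → 0 and (1/σ_k) ∑_{j=0}^k α_j p^{j+1} → x_* strongly, then x̄ = x_*. -/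
open RealInnerProductSpace

theorem weak_cluster_point_is_limit_of_projections
    {H : Type*} [NormedAddCommGroup H] [InnerProductSpace ℝ H] [CompleteSpace H]
    (S : Set H) (hS : S.Nonempty) (hclosed : IsClosed S) (hconv : Convex ℝ S)
    (z p : ℕ → H)
    (hzbdd : ∃ R : ℝ, ∀ k, ‖z k‖ ≤ R)
    -- p k is the orthogonal projection of z k onto S (variational characterization)
    (hproj : ∀ k, p k ∈ S ∧ ∀ w ∈ S, ⟪z k - p k, w - p k⟫ ≤ 0)
    (xstar : H) (hp : Filter.Tendsto p Filter.atTop (nhds xstar))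
    (α : ℕ → ℝ) (hα : ∀ k, 0 < α k)
    (σ : ℕ → ℝ) (hσ : ∀ k, σ k = ∑ j ∈ Finset.range (k + 1), α j)
    (hσ_top : Filter.Tendsto σ Filter.atTop Filter.atTop)
    (x : ℕ → H)
    (hx : ∀ k, 1 ≤ k →
      x k = (σ (k - 1))⁻¹ • ∑ j ∈ Finset.range k, α j • z (j + 1))
    (xbar : H) (hxbarS : xbar ∈ S)
    -- xbar is a weak cluster point of (x k)
    (φ : ℕ → ℕ) (hφ : StrictMono φ)
    (hweak : ∀ y : H,
      Filter.Tendsto (fun n => ⟪x (φ n) - xbar, y⟫) Filter.atTop (nhds 0))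
    (hnorm : Filter.Tendsto
      (fun k => (σ k)⁻¹ * ∑ j ∈ Finset.range (k + 1), α j * ‖p (j + 1) - xstar‖)
      Filter.atTop (nhds 0))
    (havg : Filter.Tendsto
      (fun k => (σ k)⁻¹ • ∑ j ∈ Finset.range (k + 1), α j • p (j + 1))
      Filter.atTop (nhds xstar)) :
    xbar = xstar := by
  classical
  set y := xbar - xstar with hy
  obtain ⟨R, hR⟩ := hzbdd
  -- p is bounded
  obtain ⟨C, hC⟩ : ∃ C : ℝ, ∀ j, ‖p j‖ ≤ C := by
    have hb : BddAbove (Set.range fun n => ‖p n‖) := hp.norm.bddAbove_range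
    obtain ⟨C, hCmem⟩ := hb
    exact ⟨C, fun j => hCmem ⟨j, rfl⟩⟩
  set M : ℝ := R + C with hM
  have hMb : ∀ j, ‖z j - p j‖ ≤ M := fun j =>
    (norm_sub_le _ _).trans (add_le_add (hR j) (hC j))
  have hσpos : ∀ k, 0 < σ k := fun k => by
    rw [hσ]
    exact Finset.sum_pos (fun j _ => hα j) (by simp)
  -- per-term inequality
  have hterm : ∀ j : ℕ, ⟪z (j+1), y⟫ ≤ M * ‖p (j+1) - xstar‖ + ⟪p (j+1), y⟫ := by
    intro j
    have h1 : ⟪z (j+1) - p (j+1), xbar - p (j+1)⟫ ≤ 0 := (hproj (j+1)).2 xbar hxbarS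
    have h2 : ⟪z (j+1) - p (j+1), p (j+1) - xstar⟫ ≤ M * ‖p (j+1) - xstar‖ :=
      (real_inner_le_norm _ _).trans
        (mul_le_mul_of_nonneg_right (hMb (j+1)) (norm_nonneg _))
    have hsplit : ⟪z (j+1), y⟫
        = ⟪z (j+1) - p (j+1), xbar - p (j+1)⟫
          + ⟪z (j+1) - p (j+1), p (j+1) - xstar⟫ + ⟪p (j+1), y⟫ := by
      simp only [hy, inner_sub_left, inner_sub_right]
      ring
    linarith
  -- main averaged inequality
  have hmain : ∀ k : ℕ, ⟪x (k+1), y⟫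
      ≤ M * ((σ k)⁻¹ * ∑ j ∈ Finset.range (k + 1), α j * ‖p (j + 1) - xstar‖)
        + ⟪(σ k)⁻¹ • ∑ j ∈ Finset.range (k + 1), α j • p (j + 1), y⟫ := by
    intro k
    rw [hx (k+1) (by omega), Nat.add_sub_cancel]
    rw [real_inner_smul_left, sum_inner, real_inner_smul_left, sum_inner]
    simp only [real_inner_smul_left]
    have hsum : ∑ j ∈ Finset.range (k + 1), α j * ⟪z (j+1), y⟫
        ≤ ∑ j ∈ Finset.range (k + 1), α j * (M * ‖p (j + 1) - xstar‖ + ⟪p (j+1), y⟫) :=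
      Finset.sum_le_sum fun j _ =>
        mul_le_mul_of_nonneg_left (hterm j) (hα j).le
    have hinv : (0:ℝ) ≤ (σ k)⁻¹ := (inv_pos.mpr (hσpos k)).le
    calc (σ k)⁻¹ * ∑ j ∈ Finset.range (k + 1), α j * ⟪z (j+1), y⟫
        ≤ (σ k)⁻¹ * ∑ j ∈ Finset.range (k + 1),
            α j * (M * ‖p (j + 1) - xstar‖ + ⟪p (j+1), y⟫) :=
          mul_le_mul_of_nonneg_left hsum hinv
      _ = M * ((σ k)⁻¹ * ∑ j ∈ Finset.range (k + 1), α j * ‖p (j + 1) - xstar‖)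
          + (σ k)⁻¹ * ∑ j ∈ Finset.range (k + 1), α j * ⟪p (j+1), y⟫ := by
          simp only [Finset.mul_sum, ← Finset.sum_add_distrib]
          exact Finset.sum_congr rfl fun j _ => by ring
  -- subsequence index tendsto atTop
  have hφge : ∀ n, n ≤ φ n := fun n => hφ.le_apply
  have hψ : Filter.Tendsto (fun n => φ n - 1) Filter.atTop Filter.atTop :=
    Filter.tendsto_atTop_mono (fun n => Nat.sub_le_sub_right (hφge n) 1)
      (Filter.tendsto_sub_atTop_nat 1)
  -- limits
  have hL : Filter.Tendsto (fun n => ⟪x (φ n), y⟫) Filter.atTop (nhds ⟪xbar, y⟫) := by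
    have := (hweak y).add_const ⟪xbar, y⟫
    simpa [inner_sub_left] using this
  have hA : Filter.Tendsto
      (fun n => (σ (φ n - 1))⁻¹ * ∑ j ∈ Finset.range ((φ n - 1) + 1),
        α j * ‖p (j + 1) - xstar‖) Filter.atTop (nhds 0) := hnorm.comp hψ
  have hB : Filter.Tendsto
      (fun n => (σ (φ n - 1))⁻¹ • ∑ j ∈ Finset.range ((φ n - 1) + 1),
        α j • p (j + 1)) Filter.atTop (nhds xstar) := havg.comp hψ
  have hR2 : Filter.Tendsto
      (fun n => M * ((σ (φ n - 1))⁻¹ * ∑ j ∈ Finset.range ((φ n - 1) + 1),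
          α j * ‖p (j + 1) - xstar‖)
        + ⟪(σ (φ n - 1))⁻¹ • ∑ j ∈ Finset.range ((φ n - 1) + 1),
          α j • p (j + 1), y⟫)
      Filter.atTop (nhds (M * 0 + ⟪xstar, y⟫)) :=
    ((hA.const_mul M).add (hB.inner tendsto_const_nhds))
  have hev : ∀ᶠ n in Filter.atTop, ⟪x (φ n), y⟫
      ≤ M * ((σ (φ n - 1))⁻¹ * ∑ j ∈ Finset.range ((φ n - 1) + 1),
          α j * ‖p (j + 1) - xstar‖)
        + ⟪(σ (φ n - 1))⁻¹ • ∑ j ∈ Finset.range ((φ n - 1) + 1),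
          α j • p (j + 1), y⟫ := by
    filter_upwards [Filter.eventually_ge_atTop 1] with n hn
    have h1 : 1 ≤ φ n := le_trans hn (hφge n)
    have hφn : φ n = (φ n - 1) + 1 := by omega
    calc ⟪x (φ n), y⟫ = ⟪x ((φ n - 1) + 1), y⟫ := by rw [← hφn]
      _ ≤ _ := hmain (φ n - 1)
  have hfin : ⟪xbar, y⟫ ≤ M * 0 + ⟪xstar, y⟫ :=
    le_of_tendsto_of_tendsto hL hR2 hev
  have hyy : ⟪y, y⟫ ≤ 0 := by
    have : ⟪xbar - xstar, y⟫ ≤ 0 := by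
      rw [inner_sub_left]; linarith [hfin]
    simpa [hy] using this
  have : y = 0 := by
    have := real_inner_self_nonpos.mp hyy
    exact this
  have h0 : xbar - xstar = 0 := this
  exact sub_eq_zero.mp h0
end
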